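/- Along any solution of the error system ė_pⁱ = e_vⁱ, mᵢė_vⁱ = uⁱ with the control law uⁱ = −Σ_{j∈Nᵢ} w_{ij}(e_vⁱ − e_vʲ) − Σ_{j∈Nᵢ} ∇_{e_pⁱ}Ṽ^{ij} − e_vⁱ (direct velocity regulation instead of momentum regulation), the energy function J = (1/2)Σ_{i=1}^N (Ṽⁱ + mᵢ e_vⁱᵀe_vⁱ) satisfies J̇ = −e_vᵀ(L⊗Iₙ)e_v − e_vᵀe_v ≤ 0, and J̇ = 0 only if e_v¹ = ⋯ = e_vᴺ = 0. -/

import Mathlib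

open Filter Topology Matrix
open scoped Kronecker RealInnerProductSpace

/-!
Differentiating `J`, the kinetic part contributes `Σᵢ ⟪uⁱ, e_vⁱ⟫`. Each `Ṽ^{ij}` is an even
function of `e_pⁱ - e_pʲ`, so its gradient is odd; together with `Ṽ^{ij} = Ṽ^{ji}` this makes the
pair potential contribute exactly `Σᵢ Σ_{j∈Nᵢ} ⟪∇Ṽ^{ij}, e_vⁱ⟫`, which cancels the potential term
of the control law. What remains is `-Σᵢ Σⱼ w_{ij} ⟪e_vⁱ - e_vʲ, e_vⁱ⟫ - Σᵢ ‖e_vⁱ‖²`, i.e. minus the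
quadratic form of `L ⊗ Iₙ`, which equals `½ Σ w_{ij} ‖e_vⁱ - e_vʲ‖² ≥ 0`, minus `e_vᵀe_v`.
-/

open Finset

section Gradient

variable {F : Type*} [NormedAddCommGroup F] [InnerProductSpace ℝ F] [CompleteSpace F]

theorem gradient_neg_of_even {f : F → ℝ} (hf : ∀ z, f (-z) = f z) (x : F) :
    gradient f (-x) = -gradient f x := by
  have h := fderiv_comp_smul (𝕜 := ℝ) (f := f) (x := -x) (-1)
  simp only [neg_smul, one_smul, hf, neg_neg] at h
  rw [gradient, gradient, h, map_neg]

theorem HasGradientAt.comp_hasDerivAt {f : F → ℝ} {f' : F} {p : ℝ → F} {p' : F} {t : ℝ}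
    (hf : HasGradientAt f f' (p t)) (hp : HasDerivAt p p' t) :
    HasDerivAt (fun s => f (p s)) ⟪f', p'⟫ t := by
  simpa [Function.comp_def] using hf.hasFDerivAt.comp_hasDerivAt t hp

end Gradient

section Laplacian

variable {ι : Type*} [Fintype ι] {E : Type*} [NormedAddCommGroup E] [InnerProductSpace ℝ E]

def weightedLaplacian [DecidableEq ι] (w : ι → ι → ℝ) : Matrix ι ι ℝ :=
  fun i j => if i = j then ∑ k ∈ univ.erase i, w i k else -w i j

theorem sum_weightedLaplacian_mul_inner [DecidableEq ι] (w : ι → ι → ℝ) (x : ι → E) :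
    ∑ i, ∑ j, weightedLaplacian w i j * ⟪x i, x j⟫ = ∑ i, ∑ j, w i j * ⟪x i - x j, x i⟫ := by
  refine sum_congr rfl fun i _ => ?_
  rw [← add_sum_erase _ _ (mem_univ i), ← add_sum_erase _ _ (mem_univ i), sub_self,
    inner_zero_left, mul_zero, zero_add, weightedLaplacian, if_pos rfl, sum_mul,
    ← sum_add_distrib]
  refine sum_congr rfl fun j hj => ?_
  rw [weightedLaplacian, if_neg (ne_of_mem_erase hj).symm, inner_sub_left,
    real_inner_comm (x j)]
  ring

theorem sum_weight_mul_inner_sub_eq_half {w : ι → ι → ℝ} (hw : ∀ i j, w i j = w j i)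
    (x : ι → E) :
    ∑ i, ∑ j, w i j * ⟪x i - x j, x i⟫ = (1 / 2) * ∑ i, ∑ j, w i j * ‖x i - x j‖ ^ 2 := by
  have hswap : ∑ i, ∑ j, w i j * ⟪x i - x j, x i⟫ = ∑ i, ∑ j, w i j * ⟪x i - x j, -x j⟫ := by
    rw [sum_comm]
    refine sum_congr rfl fun i _ => sum_congr rfl fun j _ => ?_
    rw [hw, inner_neg_right, ← inner_neg_left, neg_sub, real_inner_comm]
  have hsq : ∀ i j, ⟪x i - x j, x i⟫ + ⟪x i - x j, -x j⟫ = ‖x i - x j‖ ^ 2 := fun i j => by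
    rw [← inner_add_right, ← sub_eq_add_neg, real_inner_self_eq_norm_sq]
  have htwice :
      2 * ∑ i, ∑ j, w i j * ⟪x i - x j, x i⟫ = ∑ i, ∑ j, w i j * ‖x i - x j‖ ^ 2 := by
    rw [two_mul]
    nth_rewrite 2 [hswap]
    simp only [← sum_add_distrib, ← mul_add, hsq]
  linarith

theorem sum_weightedLaplacian_mul_inner_nonneg [DecidableEq ι] {w : ι → ι → ℝ}
    (hw_symm : ∀ i j, w i j = w j i) (hw_nonneg : ∀ i j, 0 ≤ w i j) (x : ι → E) :
    0 ≤ ∑ i, ∑ j, weightedLaplacian w i j * ⟪x i, x j⟫ := by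
  rw [sum_weightedLaplacian_mul_inner, sum_weight_mul_inner_sub_eq_half hw_symm]
  exact mul_nonneg (by norm_num) (sum_nonneg fun i _ => sum_nonneg fun j _ =>
    mul_nonneg (hw_nonneg i j) (sq_nonneg _))

end Laplacian

section BlockVector

variable {ι κ : Type*} [Fintype ι] [Fintype κ]

def blockVec (x : ι → EuclideanSpace ℝ κ) : ι × κ → ℝ :=
  fun p => x p.1 p.2

theorem blockVec_dotProduct_kronecker_one_mulVec [DecidableEq κ] (A : Matrix ι ι ℝ)
    (x : ι → EuclideanSpace ℝ κ) :
    blockVec x ⬝ᵥ (A ⊗ₖ (1 : Matrix κ κ ℝ)) *ᵥ blockVec x = ∑ i, ∑ j, A i j * ⟪x i, x j⟫ := by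
  simp only [blockVec, dotProduct, mulVec, kroneckerMap_apply, one_apply, Fintype.sum_prod_type,
    PiLp.inner_apply, RCLike.inner_apply, conj_trivial, mul_sum, mul_ite, ite_mul, mul_one,
    mul_zero, zero_mul, sum_ite_eq, mem_univ, if_true]
  refine sum_congr rfl fun i _ => sum_comm.trans (sum_congr rfl fun j _ => ?_)
  exact sum_congr rfl fun a _ => by ring

theorem blockVec_dotProduct_self (x : ι → EuclideanSpace ℝ κ) :
    blockVec x ⬝ᵥ blockVec x = ∑ i, ⟪x i, x i⟫ := by
  simp only [blockVec, dotProduct, Fintype.sum_prod_type, PiLp.inner_apply, RCLike.inner_apply,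
    conj_trivial]

end BlockVector

section PairPotential

variable {V : Type*} [Fintype V] (G : SimpleGraph V) [DecidableRel G.Adj]
  {E : Type*} [NormedAddCommGroup E] [InnerProductSpace ℝ E]

theorem sum_sum_neighborFinset_comm {M : Type*} [AddCommMonoid M] (f : V → V → M) :
    ∑ i, ∑ j ∈ G.neighborFinset i, f i j = ∑ i, ∑ j ∈ G.neighborFinset i, f j i :=
  sum_comm' fun i j => by simp [G.adj_comm]

theorem sum_sum_neighborFinset_inner_sub {g : V → V → E}
    (hg : ∀ i j, G.Adj i j → g j i = -g i j) (v : V → E) :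
    ∑ i, ∑ j ∈ G.neighborFinset i, ⟪g i j, v i - v j⟫
      = 2 * ∑ i, ∑ j ∈ G.neighborFinset i, ⟪g i j, v i⟫ := by
  have hswap : ∑ i, ∑ j ∈ G.neighborFinset i, ⟪g i j, v j⟫
      = -∑ i, ∑ j ∈ G.neighborFinset i, ⟪g i j, v i⟫ := by
    rw [sum_sum_neighborFinset_comm, ← sum_neg_distrib]
    refine sum_congr rfl fun i _ => ?_
    rw [← sum_neg_distrib]
    refine sum_congr rfl fun j hj => ?_
    rw [hg i j ((G.mem_neighborFinset i j).1 hj), inner_neg_left]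
  simp only [inner_sub_right, sum_sub_distrib, hswap]
  ring

theorem hasDerivAt_sum_pairwise_potential [CompleteSpace E] {P : V → V → E → ℝ}
    (hP_symm : ∀ i j, P i j = P j i) (hP_even : ∀ i j z, P i j (-z) = P i j z)
    {p : V → ℝ → E} {p' : V → E} {t : ℝ}
    (hP_diff : ∀ i j, G.Adj i j → DifferentiableAt ℝ (P i j) (p i t - p j t))
    (hp : ∀ i, HasDerivAt (p i) (p' i) t) :
    HasDerivAt (fun s => ∑ i, ∑ j ∈ G.neighborFinset i, P i j (p i s - p j s))
      (2 * ∑ i, ∑ j ∈ G.neighborFinset i, ⟪gradient (P i j) (p i t - p j t), p' i⟫) t := by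
  have hanti : ∀ i j, G.Adj i j →
      gradient (P j i) (p j t - p i t) = -gradient (P i j) (p i t - p j t) := fun i j _ => by
    rw [← hP_symm, ← neg_sub, gradient_neg_of_even (hP_even i j)]
  rw [← sum_sum_neighborFinset_inner_sub G hanti]
  refine HasDerivAt.fun_sum fun i _ => HasDerivAt.fun_sum fun j hj => ?_
  exact (hP_diff i j ((G.mem_neighborFinset i j).1 hj)).hasGradientAt.comp_hasDerivAt
    ((hp i).sub (hp j))

end PairPotential

theorem hasDerivAt_mul_inner_self {E : Type*} [NormedAddCommGroup E] [InnerProductSpace ℝ E]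
    {m : ℝ} (hm : m ≠ 0) {v : ℝ → E} {u : E} {t : ℝ} (hv : HasDerivAt v (m⁻¹ • u) t) :
    HasDerivAt (fun s => m * ⟪v s, v s⟫) (2 * ⟪u, v t⟫) t := by
  refine ((hv.inner ℝ hv).const_mul m).congr_deriv ?_
  rw [real_inner_smul_left, real_inner_smul_right, real_inner_comm]
  field_simp
  ring

theorem hasDerivAt_energy_of_velocity_regulation {V : Type*} [Fintype V] (G : SimpleGraph V)
    [DecidableRel G.Adj] {E : Type*} [NormedAddCommGroup E] [InnerProductSpace ℝ E]
    [CompleteSpace E] {m : V → ℝ} (hm : ∀ i, m i ≠ 0)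
    {w : V → V → ℝ} (hw : ∀ i j, ¬G.Adj i j → w i j = 0) {P : V → V → E → ℝ}
    (hP_symm : ∀ i j, P i j = P j i) (hP_even : ∀ i j z, P i j (-z) = P i j z)
    {p v u : V → ℝ → E} {t : ℝ}
    (hP_diff : ∀ i j, G.Adj i j → DifferentiableAt ℝ (P i j) (p i t - p j t))
    (hu : ∀ i, u i t =
      -(∑ j ∈ G.neighborFinset i, w i j • (v i t - v j t))
      - (∑ j ∈ G.neighborFinset i, gradient (P i j) (p i t - p j t))
      - v i t)
    (hp : ∀ i, HasDerivAt (p i) (v i t) t) (hv : ∀ i, HasDerivAt (v i) ((m i)⁻¹ • u i t) t) :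
    HasDerivAt (fun s => (1 / 2) * ∑ i,
        ((∑ j ∈ G.neighborFinset i, P i j (p i s - p j s)) + m i * ⟪v i s, v i s⟫))
      (-(∑ i, ∑ j, w i j * ⟪v i t - v j t, v i t⟫) - ∑ i, ⟪v i t, v i t⟫) t := by
  have hdamp : ∀ i, ∑ j ∈ G.neighborFinset i, w i j * ⟪v i t - v j t, v i t⟫
      = ∑ j, w i j * ⟪v i t - v j t, v i t⟫ := fun i =>
    sum_subset (subset_univ _) fun j _ hj => by rw [hw i j (by simpa using hj), zero_mul]
  have hpower : ∀ i, ⟪u i t, v i t⟫ = -(∑ j, w i j * ⟪v i t - v j t, v i t⟫)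
      - ∑ j ∈ G.neighborFinset i, ⟪gradient (P i j) (p i t - p j t), v i t⟫
      - ⟪v i t, v i t⟫ := fun i => by
    rw [← hdamp, hu]
    simp only [inner_sub_left, inner_neg_left, sum_inner, real_inner_smul_left]
  simp only [sum_add_distrib]
  refine (((hasDerivAt_sum_pairwise_potential G hP_symm hP_even hP_diff hp).fun_add
    (HasDerivAt.fun_sum (u := univ) fun i _ => hasDerivAt_mul_inner_self (hm i) (hv i))).const_mul
      (1 / 2)).congr_deriv ?_
  simp only [hpower, ← mul_sum, sum_sub_distrib, sum_neg_distrib]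
  ring

theorem energy_derivative_velocity_regulation_general
    (N n : ℕ)
    (m : Fin N → ℝ) (hm : ∀ i, 0 < m i)
    (G : SimpleGraph (Fin N)) [DecidableRel G.Adj]
    (w : Fin N → Fin N → ℝ)
    (hw_symm : ∀ i j, w i j = w j i)
    (hw_nonneg : ∀ i j, 0 ≤ w i j)
    (hw_adj : ∀ i j, 0 < w i j ↔ G.Adj i j)
    -- the potential `Ṽ^{ij}`, viewed as a function of the relative position
    -- vector `e_pⁱ - e_pʲ`
    (V : Fin N → Fin N → EuclideanSpace ℝ (Fin n) → ℝ)
    (hV_symm : ∀ i j, V i j = V j i)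
    (hV_rad : ∀ i j (z z' : EuclideanSpace ℝ (Fin n)), ‖z‖ = ‖z'‖ → V i j z = V i j z')
    (hV_diff : ∀ i j, G.Adj i j → Differentiable ℝ (V i j))
    (ep ev u : Fin N → ℝ → EuclideanSpace ℝ (Fin n))
    (hu : ∀ i t, u i t =
      -(∑ j ∈ G.neighborFinset i, w i j • (ev i t - ev j t))
      - (∑ j ∈ G.neighborFinset i, gradient (V i j) (ep i t - ep j t))
      - ev i t)
    (hep : ∀ i t, HasDerivAt (ep i) (ev i t) t)
    (hev : ∀ i t, HasDerivAt (ev i) ((m i)⁻¹ • u i t) t)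
    (L : Matrix (Fin N) (Fin N) ℝ)
    (hL : ∀ i j, L i j = if i = j then ∑ k ∈ Finset.univ.erase i, w i k else -w i j)
    (J : ℝ → ℝ)
    (hJ : ∀ t, J t = (1 / 2) * ∑ i,
      ((∑ j ∈ G.neighborFinset i, V i j (ep i t - ep j t)) + m i * ⟪ev i t, ev i t⟫))
    -- the stacked vector `e_v(t) ∈ ℝ^{Nn}`
    (e : ℝ → Fin N × Fin n → ℝ)
    (he : ∀ t p, e t p = ev p.1 t p.2) :
    ∀ t : ℝ,
      HasDerivAt J
        (-(e t ⬝ᵥ (L ⊗ₖ (1 : Matrix (Fin n) (Fin n) ℝ)).mulVec (e t))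
          - e t ⬝ᵥ e t) t ∧
      (-(e t ⬝ᵥ (L ⊗ₖ (1 : Matrix (Fin n) (Fin n) ℝ)).mulVec (e t))
          - e t ⬝ᵥ e t ≤ 0) ∧
      ((-(e t ⬝ᵥ (L ⊗ₖ (1 : Matrix (Fin n) (Fin n) ℝ)).mulVec (e t))
          - e t ⬝ᵥ e t = 0) →
        ∀ i, ev i t = 0) := by
  intro t
  have hLap : L = weightedLaplacian w := Matrix.ext hL
  have he_t : e t = blockVec (ev · t) := funext (he t)
  have hQ : e t ⬝ᵥ (L ⊗ₖ 1) *ᵥ e t = ∑ i, ∑ j, weightedLaplacian w i j * ⟪ev i t, ev j t⟫ := by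
    rw [he_t, hLap, blockVec_dotProduct_kronecker_one_mulVec]
  have hQ_nonneg := hQ ▸ sum_weightedLaplacian_mul_inner_nonneg hw_symm hw_nonneg (ev · t)
  have hS_nonneg : 0 ≤ e t ⬝ᵥ e t := by simpa using dotProduct_self_star_nonneg (e t)
  refine ⟨?_, by linarith, fun h0 i => ?_⟩
  · have hw_zero : ∀ i j, ¬G.Adj i j → w i j = 0 := fun i j h =>
      le_antisymm (not_lt.1 (mt (hw_adj i j).1 h)) (hw_nonneg i j)
    rw [hQ, sum_weightedLaplacian_mul_inner, he_t, blockVec_dotProduct_self, funext hJ]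
    exact hasDerivAt_energy_of_velocity_regulation G (fun i => (hm i).ne') hw_zero hV_symm
      (fun i j z => hV_rad i j _ _ (norm_neg z)) (fun i j h => (hV_diff i j h).differentiableAt)
      (hu · t) (hep · t) (hev · t)
  · have he0 : e t = 0 := dotProduct_self_eq_zero.1 (by linarith)
    ext a
    simpa [he] using congrFun he0 (i, a)

/-- **Theorem 2 (energy decay).** Along any solution of the error system
`ė_pⁱ = e_vⁱ`, `mᵢė_vⁱ = uⁱ` with control law
`uⁱ = -Σ_{j∈Nᵢ} w_{ij}(e_vⁱ - e_vʲ) - Σ_{j∈Nᵢ} ∇_{e_pⁱ}Ṽ^{ij} - e_vⁱ`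
(direct velocity regulation), the energy `J = ½Σᵢ(Ṽⁱ + mᵢ e_vⁱᵀe_vⁱ)` satisfies
`J̇ = -e_vᵀ(L⊗Iₙ)e_v - e_vᵀe_v ≤ 0`, and `J̇ = 0` only if all `e_vⁱ = 0`. -/
theorem energy_derivative_velocity_regulation
    (N n : ℕ)
    (m : Fin N → ℝ) (hm : ∀ i, 0 < m i)
    (G : SimpleGraph (Fin N)) [DecidableRel G.Adj] (hG : G.Connected)
    (w : Fin N → Fin N → ℝ)
    (hw_symm : ∀ i j, w i j = w j i)
    (hw_nonneg : ∀ i j, 0 ≤ w i j)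
    (hw_diag : ∀ i, w i i = 0)
    (hw_adj : ∀ i j, 0 < w i j ↔ G.Adj i j)
    -- the potential `Ṽ^{ij}`, viewed as a function of the relative position
    -- vector `e_pⁱ - e_pʲ`
    (V : Fin N → Fin N → EuclideanSpace ℝ (Fin n) → ℝ)
    (hV_symm : ∀ i j, V i j = V j i)
    (hV_rad : ∀ i j (z z' : EuclideanSpace ℝ (Fin n)), ‖z‖ = ‖z'‖ → V i j z = V i j z')
    (hV_diff : ∀ i j, G.Adj i j → Differentiable ℝ (V i j))
    (hV_nonneg : ∀ i j z, 0 ≤ V i j z)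
    (ep ev u : Fin N → ℝ → EuclideanSpace ℝ (Fin n))
    (hu : ∀ i t, u i t =
      -(∑ j ∈ G.neighborFinset i, w i j • (ev i t - ev j t))
      - (∑ j ∈ G.neighborFinset i, gradient (V i j) (ep i t - ep j t))
      - ev i t)
    (hep : ∀ i t, HasDerivAt (ep i) (ev i t) t)
    (hev : ∀ i t, HasDerivAt (ev i) ((m i)⁻¹ • u i t) t)
    (L : Matrix (Fin N) (Fin N) ℝ)
    (hL : ∀ i j, L i j = if i = j then ∑ k ∈ Finset.univ.erase i, w i k else -w i j)
    (J : ℝ → ℝ)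
    (hJ : ∀ t, J t = (1 / 2) * ∑ i,
      ((∑ j ∈ G.neighborFinset i, V i j (ep i t - ep j t)) + m i * ⟪ev i t, ev i t⟫))
    -- the stacked vector `e_v(t) ∈ ℝ^{Nn}`
    (e : ℝ → Fin N × Fin n → ℝ)
    (he : ∀ t p, e t p = ev p.1 t p.2) :
    ∀ t : ℝ,
      HasDerivAt J
        (-(e t ⬝ᵥ (L ⊗ₖ (1 : Matrix (Fin n) (Fin n) ℝ)).mulVec (e t))
          - e t ⬝ᵥ e t) t ∧
      (-(e t ⬝ᵥ (L ⊗ₖ (1 : Matrix (Fin n) (Fin n) ℝ)).mulVec (e t))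
          - e t ⬝ᵥ e t ≤ 0) ∧
      ((-(e t ⬝ᵥ (L ⊗ₖ (1 : Matrix (Fin n) (Fin n) ℝ)).mulVec (e t))
          - e t ⬝ᵥ e t = 0) →
        ∀ i, ev i t = 0) :=
  energy_derivative_velocity_regulation_general N n m hm G w hw_symm hw_nonneg hw_adj V hV_symm
    hV_rad hV_diff ep ev u hu hep hev L hL J hJ e he
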